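/- arXiv:math/0303050 — 2 statements merged into one kernel-verified Lean document; each statement's English description precedes it below -/
import Mathlib

section
/- Let (F;R₁,…,R_n) be a normal (n+1)-ad of groups and k ≥ 2. Suppose that for every 1 ≤ j ≤ n the normal (j+1)-ad (F;R₁,…,R_j) is simple relative to R_j. Then for every 1 ≤ j ≤ n: (⋂_{i∈⟨j⟩} R_i) ∩ Γ_k(F) = D_k(F;⟨j⟩). -/
open Pointwise

/-- Iterated commutator `⁅H₁, ⁅H₂, …, ⁅H_{k-1}, H_k⁆…⁆⁆` of a list of subgroups. -/
def iterCommutator {F : Type*} [Group F] : List (Subgroup F) → Subgroup F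
  | [] => ⊥
  | [H] => H
  | H :: t => ⁅H, iterCommutator t⁆

/-- `K_B = ⋂_{i∈B} R_i`, with the convention `K_∅ = F`. -/
def adInf {F : Type*} [Group F] {n : ℕ} (R : Fin n → Subgroup F) (B : Finset (Fin n)) :
    Subgroup F :=
  ⨅ i ∈ B, R i

/-- `D_k(F;A)`: the product (join) of the iterated commutator subgroups
`⁅K_{A₁},⁅K_{A₂},…,⁅K_{A_{k-1}},K_{A_k}⁆…⁆⁆` over all `k`-tuples `(A₁,…,A_k)` of
(possibly empty) subsets with `A₁ ∪ ⋯ ∪ A_k = A`. -/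
def adD {F : Type*} [Group F] {n : ℕ} (R : Fin n → Subgroup F) (k : ℕ) (A : Finset (Fin n)) :
    Subgroup F :=
  ⨆ (c : Fin k → Finset (Fin n)) (_ : Finset.univ.sup c = A),
    iterCommutator (List.ofFn fun i => adInf R (c i))

/-!
Induction on `j`. Simplicity relative to `R_j` makes `F'` a complement of `R_j`, so there is a
retraction `ρ : F →* F` onto `F'` killing `R_j`, and for `A ⊆ ⟨j-1⟩` it maps `K_A` into itself
with `ρ(x)⁻¹ x ∈ K_{A ∪ {j}}`. Writing each entry `h` of an iterated commutator of the `K_{A_i}`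
as `ρ(h)` times an element of `K_{A_i ∪ {j}}` shows that `ρ(x) ≡ x` modulo `D_k(F;⟨j⟩)` for all
`x ∈ D_k(F;⟨j-1⟩)`. An element `w` of `K_{⟨j⟩} ∩ Γ_k(F)` lies in `D_k(F;⟨j-1⟩)` by induction and
has `ρ(w) = 1` since `w ∈ R_j`, hence `w ∈ D_k(F;⟨j⟩)`.
-/

open scoped commutatorElement
open Subgroup QuotientGroup

theorem commutatorElement_mul_mul_of_commute {G : Type*} [Group G] {a c d e : G}
    (hdc : Commute d c) (he : Commute (a * d) e) : ⁅a * d, c * e⁆ = ⁅a, c⁆ := by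
  simp only [commutatorElement_def]
  calc a * d * (c * e) * (a * d)⁻¹ * (c * e)⁻¹
      = a * d * c * (e * (a * d)⁻¹) * e⁻¹ * c⁻¹ := by group
    _ = a * (d * c) * d⁻¹ * a⁻¹ * c⁻¹ := by rw [← he.inv_left.eq]; group
    _ = a * c * a⁻¹ * c⁻¹ := by rw [hdc.eq]; group

theorem Finset.Iio_eq_Iic_max' {α : Type*} [LinearOrder α] [LocallyFiniteOrderBot α] {a : α}
    (h : (Finset.Iio a).Nonempty) : Finset.Iio a = Finset.Iic ((Finset.Iio a).max' h) := by
  ext x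
  rw [Finset.mem_Iio, Finset.mem_Iic]
  exact ⟨fun hx => Finset.le_max' _ _ (Finset.mem_Iio.2 hx),
    fun hx => hx.trans_lt (Finset.mem_Iio.1 (Finset.max'_mem _ h))⟩

section Subgroup

variable {F : Type*} [Group F]

instance Subgroup.normal_iSup_normal {ι : Sort*} (H : ι → Subgroup F) [∀ i, (H i).Normal] :
    (⨆ i, H i).Normal where
  conj_mem x hx g := by
    have : (⨆ i, H i).map (MulAut.conj g).toMonoidHom ≤ ⨆ i, H i := by
      rw [map_iSup]
      exact iSup_mono fun i => (Normal.map_conj_eq (H i) g).le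
    exact this ⟨x, hx, rfl⟩

theorem Subgroup.commutator_le_iff_le_comap_centralizer {H K S : Subgroup F} [S.Normal] :
    ⁅H, K⁆ ≤ S ↔ K ≤ (centralizer (H.map (mk' S))).comap (mk' S) := by
  rw [← map_le_iff_le_comap, ← commutator_eq_bot_iff_le_centralizer, commutator_comm,
    ← map_commutator, Subgroup.map_eq_bot_iff, ker_mk']

theorem Subgroup.IsComplement'.exists_retraction {H N : Subgroup F} [N.Normal]
    (h : H.IsComplement' N) : ∃ ρ : F →* F, (∀ x ∈ H, ρ x = x) ∧ ∀ x ∈ N, ρ x = 1 := by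
  refine ⟨H.subtype.comp ((h.QuotientMulEquiv : F ⧸ N →* H).comp (mk' N)), fun x hx => ?_,
    fun x hx => ?_⟩
  · have : h.QuotientMulEquiv.symm ⟨x, hx⟩ = (x : F ⧸ N) := rfl
    simp [← this]
  · simp only [MonoidHom.coe_comp, Function.comp_apply, mk'_apply,
      (QuotientGroup.eq_one_iff x).mpr hx, map_one]

theorem apply_mem_and_inv_mul_mem_of_coe_eq_mul {H F' N : Subgroup F} {ρ : F →* F}
    (hρF' : ∀ x ∈ F', ρ x = x) (hρN : ∀ x ∈ N, ρ x = 1)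
    (hH : (H : Set F) = ↑(H ⊓ F') * ↑(H ⊓ N)) {x : F} (hx : x ∈ H) :
    ρ x ∈ H ∧ (ρ x)⁻¹ * x ∈ H ⊓ N := by
  rw [← SetLike.mem_coe, hH] at hx
  obtain ⟨p, ⟨hpH, hpF'⟩, m, hm, rfl⟩ := hx
  rw [map_mul, hρF' p hpF', hρN m hm.2, mul_one, inv_mul_cancel_left]
  exact ⟨hpH, hm⟩

end Subgroup

section IterCommutator

variable {F : Type*} [Group F]

theorem iterCommutator_cons_cons (H K : Subgroup F) (l : List (Subgroup F)) :
    iterCommutator (H :: K :: l) = ⁅H, iterCommutator (K :: l)⁆ := rfl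

theorem iterCommutator_cons_ofFn {m : ℕ} (H : Subgroup F) (A : Fin (m + 1) → Subgroup F) :
    iterCommutator (H :: List.ofFn A) = ⁅H, iterCommutator (List.ofFn A)⁆ := by
  rw [List.ofFn_succ]; rfl

theorem iterCommutator_normal :
    ∀ l : List (Subgroup F), (∀ H ∈ l, H.Normal) → (iterCommutator l).Normal
  | [], _ => normal_bot
  | [H], hl => hl H (by simp)
  | H :: K :: l, hl => by
    have := hl H (by simp)
    have := iterCommutator_normal (K :: l) fun H' hH' => hl H' (by simp [hH'])
    rw [iterCommutator_cons_cons]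
    infer_instance

theorem iterCommutator_le_of_mem {N : Subgroup F} [N.Normal] :
    ∀ {l : List (Subgroup F)} {H : Subgroup F}, H ∈ l → H ≤ N → iterCommutator l ≤ N
  | [_], _, hH, hHN => by rwa [List.mem_singleton.mp hH] at hHN
  | H' :: K :: l, H, hH, hHN => by
    rw [iterCommutator_cons_cons]
    rcases List.mem_cons.mp hH with rfl | hH
    · exact (commutator_mono hHN le_top).trans (commutator_le_left N ⊤)
    · exact (commutator_le_right _ _).trans' <|
        commutator_mono le_rfl (iterCommutator_le_of_mem hH hHN)

theorem iterCommutator_le_lowerCentralSeries :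
    ∀ l : List (Subgroup F),
      iterCommutator l ≤ (⊤ : Subgroup F).lowerCentralSeries (l.length - 1)
  | [] => bot_le
  | [_] => le_top
  | H :: K :: l => by
    rw [iterCommutator_cons_cons, commutator_comm]
    exact commutator_mono (iterCommutator_le_lowerCentralSeries (K :: l)) le_top

theorem iterCommutator_replicate_top :
    ∀ m : ℕ, iterCommutator (List.replicate (m + 1) (⊤ : Subgroup F))
      = (⊤ : Subgroup F).lowerCentralSeries m
  | 0 => rfl
  | m + 1 => by
    rw [List.replicate_succ, List.replicate_succ, iterCommutator_cons_cons, ← List.replicate_succ,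
      iterCommutator_replicate_top m, commutator_comm]
    rfl

theorem map_iterCommutator_le (ρ : F →* F) :
    ∀ l : List (Subgroup F), (∀ H ∈ l, H.map ρ ≤ H) →
      (iterCommutator l).map ρ ≤ iterCommutator l
  | [], _ => by simp [iterCommutator]
  | [H], hl => hl H (by simp)
  | H :: K :: l, hl => by
    rw [iterCommutator_cons_cons, map_commutator]
    exact commutator_mono (hl H (by simp))
      (map_iterCommutator_le ρ (K :: l) fun H' hH' => hl H' (by simp [hH']))

theorem iterCommutator_ofFn_le_eqLocus (ρ : F →* F) :
    ∀ {m : ℕ} (A B : Fin m → Subgroup F) (S : Subgroup F) [S.Normal], (∀ i, (A i).Normal) →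
      (∀ i, (A i).map ρ ≤ A i) → (∀ i, ∀ x ∈ A i, (ρ x)⁻¹ * x ∈ B i) →
      (∀ b : Fin m → Bool, (∃ i, b i) →
        iterCommutator (List.ofFn fun i => if b i then B i else A i) ≤ S) →
      iterCommutator (List.ofFn A) ≤ ((mk' S).comp ρ).eqLocus (mk' S)
  | 0, _, _, _, _, _, _, _, _ => bot_le
  | 1, A, B, S, _, _, _, hρB, hS => by
    intro x hx
    have hBS : B 0 ≤ S := hS (fun _ => true) ⟨0, rfl⟩
    exact QuotientGroup.eq.mpr (hBS (hρB 0 x hx))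
  | m + 2, A, B, S, _, hA, hρA, hρB, hS => by
    set π := mk' S
    have := (hA 0).map π (mk'_surjective S)
    have hS' : ∀ b : Fin (m + 1) → Bool, (∃ i, b i) →
        iterCommutator (List.ofFn fun i => if b i then B i.succ else A i.succ)
          ≤ (centralizer ((A 0).map π)).comap π := by
      intro b ⟨i, hi⟩
      refine commutator_le_iff_le_comap_centralizer.mp ?_
      have := hS (Fin.cons false b) ⟨i.succ, hi⟩
      rw [List.ofFn_succ, iterCommutator_cons_ofFn] at this
      simpa using this
    have hBU : ⁅B 0, iterCommutator (List.ofFn fun i : Fin (m + 1) => A i.succ)⁆ ≤ S := by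
      have := hS (Fin.cons true fun _ => false) ⟨0, rfl⟩
      rw [List.ofFn_succ, iterCommutator_cons_ofFn] at this
      simpa using this
    rw [List.ofFn_succ, iterCommutator_cons_ofFn, commutator_le]
    intro h hh u hu
    -- Modulo `S`: `h = ρ h * d` with `d ∈ B 0` commuting with `ρ u`, and `u = ρ u * e` with
    -- `e` commuting with `h`, by induction applied to the tail modulo the centralizer of `A 0`.
    have hρu := map_iterCommutator_le ρ _ (List.forall_mem_ofFn_iff.mpr fun i => hρA i.succ)
      ⟨u, hu, rfl⟩
    have hdc : Commute (π ((ρ h)⁻¹ * h)) (π (ρ u)) := by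
      rw [← commutatorElement_eq_one_iff_commute, ← map_commutatorElement, mk'_apply,
        eq_one_iff]
      exact hBU (commutator_mem_commutator (hρB 0 h hh) hρu)
    have he : Commute (π (ρ h) * π ((ρ h)⁻¹ * h)) (π ((ρ u)⁻¹ * u)) := by
      rw [← map_mul, mul_inv_cancel_left]
      have hu' := QuotientGroup.eq.mp
        (iterCommutator_ofFn_le_eqLocus ρ _ _ _ (fun i => hA i.succ) (fun i => hρA i.succ)
          (fun i => hρB i.succ) hS' hu)
      exact (mem_centralizer_iff.mp hu' (π h) ⟨h, hh, rfl⟩)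
    show π (ρ ⁅h, u⁆) = π ⁅h, u⁆
    calc π (ρ ⁅h, u⁆) = ⁅π (ρ h), π (ρ u)⁆ := by simp only [map_commutatorElement]
      _ = ⁅π (ρ h) * π ((ρ h)⁻¹ * h), π (ρ u) * π ((ρ u)⁻¹ * u)⁆ :=
        (commutatorElement_mul_mul_of_commute hdc he).symm
      _ = π ⁅h, u⁆ := by simp only [← map_mul, mul_inv_cancel_left, map_commutatorElement]

end IterCommutator

section Ad

variable {F : Type*} [Group F] {n : ℕ} (R : Fin n → Subgroup F)

instance adInf_normal [∀ i, (R i).Normal] (B : Finset (Fin n)) : (adInf R B).Normal :=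
  normal_iInf_normal fun _ => normal_iInf_normal fun _ => inferInstance

instance adD_normal [∀ i, (R i).Normal] (k : ℕ) (A : Finset (Fin n)) : (adD R k A).Normal := by
  have (c : Fin k → Finset (Fin n)) : (iterCommutator (List.ofFn fun i => adInf R (c i))).Normal :=
    iterCommutator_normal _ (List.forall_mem_ofFn_iff.mpr fun _ => inferInstance)
  unfold adD
  infer_instance

theorem adInf_empty : adInf R ∅ = ⊤ := by simp [adInf]

theorem adInf_le {B : Finset (Fin n)} {i : Fin n} (hi : i ∈ B) : adInf R B ≤ R i :=
  iInf₂_le i hi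

theorem adInf_anti {B B' : Finset (Fin n)} (h : B ⊆ B') : adInf R B' ≤ adInf R B :=
  biInf_mono h

theorem adInf_insert (j : Fin n) (B : Finset (Fin n)) :
    adInf R (insert j B) = adInf R B ⊓ R j := by
  rw [adInf, adInf, Finset.iInf_insert, inf_comm]

theorem adD_le_adInf_inf_lowerCentralSeries [∀ i, (R i).Normal] (k : ℕ) (A : Finset (Fin n)) :
    adD R k A ≤ adInf R A ⊓ (⊤ : Subgroup F).lowerCentralSeries (k - 1) := by
  refine iSup₂_le fun c hc => le_inf (le_iInf₂ fun i hi => ?_) ?_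
  · obtain ⟨m, -, him⟩ := Finset.mem_sup.mp (hc ▸ hi)
    exact iterCommutator_le_of_mem (List.mem_ofFn.mpr ⟨m, rfl⟩) (adInf_le R him)
  · simpa using iterCommutator_le_lowerCentralSeries (List.ofFn fun i => adInf R (c i))

theorem lowerCentralSeries_le_adD_empty {k : ℕ} (hk : 1 ≤ k) :
    (⊤ : Subgroup F).lowerCentralSeries (k - 1) ≤ adD R k ∅ := by
  refine le_iSup₂_of_le (fun _ => ∅) (Finset.sup_bot _) (le_of_eq ?_)
  obtain ⟨m, rfl⟩ := Nat.exists_eq_add_of_le' hk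
  simp only [adInf_empty, List.ofFn_const, iterCommutator_replicate_top, Nat.add_sub_cancel]

theorem iterCommutator_le_adD_Iic {k : ℕ} {j : Fin n} {c : Fin k → Finset (Fin n)}
    (hc : Finset.univ.sup c = Finset.Iio j) (b : Fin k → Bool) (hb : ∃ i, b i) :
    iterCommutator (List.ofFn fun i =>
      if b i then adInf R (insert j (c i)) else adInf R (c i)) ≤ adD R k (Finset.Iic j) := by
  set c' : Fin k → Finset (Fin n) := fun i => if b i then insert j (c i) else c i
  have hc' : Finset.univ.sup c' = Finset.Iic j := by
    refine le_antisymm (Finset.sup_le fun i _ => ?_) ?_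
    · have hci : c i ⊆ Finset.Iio j := hc ▸ Finset.le_sup (f := c) (Finset.mem_univ i)
      calc c' i ⊆ insert j (c i) := by dsimp only [c']; split <;> simp [Finset.subset_insert]
        _ ⊆ insert j (Finset.Iio j) := Finset.insert_subset_insert _ hci
        _ = Finset.Iic j := Finset.Iio_insert j
    · obtain ⟨i₀, hi₀⟩ := hb
      rw [← Finset.Iio_insert, ← hc]
      refine Finset.insert_subset (Finset.mem_sup.mpr ⟨i₀, Finset.mem_univ _, by simp [c', hi₀]⟩)
        (Finset.sup_mono_fun fun i _ => ?_)
      dsimp only [c']; split <;> simp [Finset.subset_insert]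
  exact le_iSup₂_of_le c' hc' (by simp only [c', apply_ite (adInf R)]; rfl)

theorem adD_Iio_le_eqLocus [∀ i, (R i).Normal] (k : ℕ) (j : Fin n) (ρ : F →* F)
    (hρ : ∀ A : Finset (Fin n), (∀ i ∈ A, i < j) →
      ∀ x ∈ adInf R A, ρ x ∈ adInf R A ∧ (ρ x)⁻¹ * x ∈ adInf R (insert j A)) :
    adD R k (Finset.Iio j) ≤ ((mk' (adD R k (Finset.Iic j))).comp ρ).eqLocus (mk' _) := by
  refine iSup₂_le fun c hc => ?_
  have hcj (i : Fin k) : ∀ x ∈ c i, x < j := fun x hx =>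
    Finset.mem_Iio.mp (hc ▸ Finset.le_sup (f := c) (Finset.mem_univ i) hx)
  exact iterCommutator_ofFn_le_eqLocus ρ _ (fun i => adInf R (insert j (c i))) _
    (fun _ => inferInstance) (fun i => map_le_iff_le_comap.mpr fun x hx => (hρ _ (hcj i) x hx).1)
    (fun i x hx => (hρ _ (hcj i) x hx).2) (iterCommutator_le_adD_Iic R hc)

theorem adInf_Iic_inf_le_adD [∀ i, (R i).Normal] (k : ℕ) {j : Fin n} {F' : Subgroup F}
    (hbot : F' ⊓ R j = ⊥)
    (hsplit : ∀ A : Finset (Fin n), (∀ i ∈ A, i < j) →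
      (adInf R A : Set F) = ↑(adInf R A ⊓ F') * ↑(adInf R A ⊓ R j))
    (hprev : adInf R (Finset.Iio j) ⊓ (⊤ : Subgroup F).lowerCentralSeries (k - 1)
      ≤ adD R k (Finset.Iio j)) :
    adInf R (Finset.Iic j) ⊓ (⊤ : Subgroup F).lowerCentralSeries (k - 1)
      ≤ adD R k (Finset.Iic j) := by
  have hcompl : F'.IsComplement' (R j) := by
    refine isComplement'_of_disjoint_and_mul_eq_univ (disjoint_iff.mpr hbot) ?_
    simpa [adInf_empty] using (hsplit ∅ (by simp)).symm
  obtain ⟨ρ, hρF', hρR⟩ := hcompl.exists_retraction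
  have hρ (A : Finset (Fin n)) (hA : ∀ i ∈ A, i < j) (x : F) (hx : x ∈ adInf R A) :
      ρ x ∈ adInf R A ∧ (ρ x)⁻¹ * x ∈ adInf R (insert j A) :=
    adInf_insert R j A ▸ apply_mem_and_inv_mul_mem_of_coe_eq_mul hρF' hρR (hsplit A hA) hx
  rintro w ⟨hwK, hwΓ⟩
  have hw := adD_Iio_le_eqLocus R k j ρ hρ
    (hprev ⟨adInf_anti R Finset.Iio_subset_Iic_self hwK, hwΓ⟩)
  simpa [hρR w (adInf_le R (Finset.mem_Iic.mpr le_rfl) hwK)] using QuotientGroup.eq.mp hw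

end Ad

/-- If for every `j` the `(j+1)`-ad `(F;R₁,…,R_j)` is simple relative to `R_j`, then for
`k ≥ 2` and every `j`: `(⋂_{i≤j} R_i) ∩ Γ_k(F) = D_k(F;⟨j⟩)`
(where `Γ_k(F) = lowerCentralSeries F (k-1)`). -/
theorem adInf_inter_gamma_eq_adD {F : Type*} [Group F] {n : ℕ}
    (R : Fin n → Subgroup F) (hR : ∀ i, (R i).Normal) (k : ℕ) (hk : 2 ≤ k)
    (hsimple : ∀ j : Fin n, ∃ F' : Subgroup F, F' ⊓ R j = ⊥ ∧
      ∀ A : Finset (Fin n), (∀ i ∈ A, i < j) →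
        (adInf R A : Set F) = (↑(adInf R A ⊓ F') : Set F) * (↑(adInf R A ⊓ R j) : Set F)) :
    ∀ j : Fin n, adInf R (Finset.Iic j) ⊓ (⊤ : Subgroup F).lowerCentralSeries (k - 1)
      = adD R k (Finset.Iic j) := by
  intro j
  refine le_antisymm ?_ (adD_le_adInf_inf_lowerCentralSeries R k _)
  induction j using WellFoundedLT.induction with
  | _ j ih =>
    obtain ⟨F', hbot, hsplit⟩ := hsimple j
    refine adInf_Iic_inf_le_adD R k hbot hsplit ?_
    rcases (Finset.Iio j).eq_empty_or_nonempty with h | h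
    · rw [h, adInf_empty, top_inf_eq]
      exact lowerCentralSeries_le_adD_empty R (by omega)
    · rw [Finset.Iio_eq_Iic_max' h]
      exact ih _ (Finset.mem_Iio.mp (Finset.max'_mem _ h))
end

section
/- Let F be a group with normal subgroups R₁,…,R_n indexed by ⟨n⟩ = {1,…,n}, and let k ≥ 2. Then for every A ⊆ ⟨n⟩: (a) D_k(F;A) is a normal subgroup of F contained in K_A = ⋂_{i∈A}R_i; and (b) for all A, B ⊆ ⟨n⟩, if x, x' ∈ K_A with x·x'⁻¹ ∈ D_k(F;A) and y, y' ∈ K_B with y·y'⁻¹ ∈ D_k(F;B), then [x,y]·[x',y']⁻¹ ∈ D_k(F;A∪B). (Hence the commutator induces well-defined functions h̃ : K_A/D_k(F;A) × K_B/D_k(F;B) → K_{A∪B}/D_k(F;A∪B).) -/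
open scoped commutatorElement

/-! The heart of the matter is `⁅K_C, D_k(A)⁆ ≤ D_k(A ∪ C)`. By the three subgroups lemma and
induction on `k`, the commutator of `K_C` with `⁅K_{A₁}, ⁅…, K_{A_k}⁆⁆` lies in the join of the
iterated commutators in which one `K_{A_j}` is replaced by `⁅K_C, K_{A_j}⁆ ≤ K_{A_j ∪ C}`, and
each of these is one of the generators of `D_k(A ∪ C)`. Hence, modulo `D_k(A ∪ B)`, `D_k(A)`
centralizes `K_B` and `D_k(B)` centralizes `K_A`, so `[x, y]` does not change when `x` is moved
within its coset of `D_k(A)` or `y` within its coset of `D_k(B)`. -/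

namespace Subgroup

variable {G : Type*} [Group G]

theorem commutator_le_iff_map_commutator_eq_bot {H₁ H₂ N : Subgroup G} [N.Normal] :
    ⁅H₁, H₂⁆ ≤ N ↔ ⁅H₁.map (QuotientGroup.mk' N), H₂.map (QuotientGroup.mk' N)⁆ = ⊥ := by
  rw [← map_commutator, map_eq_bot_iff, QuotientGroup.ker_mk']

theorem commutator_commutator_le_of_rotate {H₁ H₂ H₃ N : Subgroup G} [N.Normal]
    (h1 : ⁅⁅H₂, H₃⁆, H₁⁆ ≤ N) (h2 : ⁅⁅H₃, H₁⁆, H₂⁆ ≤ N) : ⁅⁅H₁, H₂⁆, H₃⁆ ≤ N := by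
  simp only [commutator_le_iff_map_commutator_eq_bot, map_commutator] at *
  exact commutator_commutator_eq_bot_of_rotate h1 h2

theorem commutator_iSup_le {ι : Sort*} {H N : Subgroup G} [N.Normal] {S : ι → Subgroup G}
    (h : ∀ i, ⁅H, S i⁆ ≤ N) : ⁅H, ⨆ i, S i⁆ ≤ N := by
  simp only [commutator_le_iff_map_commutator_eq_bot, commutator_comm (H.map _),
    commutator_eq_bot_iff_le_centralizer, map_iSup, iSup_le_iff] at *
  exact h

theorem commute_mk_of_commutator_le {H₁ H₂ N : Subgroup G} [N.Normal] (h : ⁅H₁, H₂⁆ ≤ N)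
    {a b : G} (ha : a ∈ H₁) (hb : b ∈ H₂) : Commute (a : G ⧸ N) (b : G ⧸ N) := by
  rw [← commutatorElement_eq_one_iff_commute, ← QuotientGroup.mk'_apply,
    ← QuotientGroup.mk'_apply, ← map_commutatorElement, QuotientGroup.mk'_apply,
    QuotientGroup.eq_one_iff]
  exact h (commutator_mem_commutator ha hb)

end Subgroup

open Subgroup

section CommutatorElement

variable {G : Type*} [Group G]

theorem commutatorElement_mul_left_of_commute {a b c : G} (hac : Commute a c)
    (ha : Commute a ⁅b, c⁆) : ⁅a * b, c⁆ = ⁅b, c⁆ := by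
  rw [commutatorElement_mul_left_eq_conj_mul, ha.eq, hac.commutator_eq, mul_one,
    mul_inv_cancel_right]

theorem commutatorElement_mul_right_of_commute {a b c : G} (hab : Commute a b)
    (hb : Commute b ⁅a, c⁆) : ⁅a, b * c⁆ = ⁅a, c⁆ := by
  rw [commutatorElement_mul_right_eq_mul_conj, hab.commutator_eq, one_mul, hb.eq,
    mul_inv_cancel_right]

theorem commutatorElement_mul_inv_mem_of_commutator_le {H₁ H₂ K₁ K₂ N : Subgroup G}
    [N.Normal] [K₁.Normal] [K₂.Normal] (h₁ : ⁅H₁, K₂⁆ ≤ N) (h₂ : ⁅K₁, H₂⁆ ≤ N)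
    {x x' y y' : G} (hx' : x' ∈ K₁) (hy : y ∈ K₂) (hxx' : x * x'⁻¹ ∈ H₁)
    (hyy' : y * y'⁻¹ ∈ H₂) : ⁅x, y⁆ * ⁅x', y'⁆⁻¹ ∈ N := by
  obtain ⟨d, hd, rfl⟩ : ∃ d ∈ H₁, x = d * x' := ⟨_, hxx', (inv_mul_cancel_right x x').symm⟩
  obtain ⟨e, he, rfl⟩ : ∃ e ∈ H₂, y = e * y' := ⟨_, hyy', (inv_mul_cancel_right y y').symm⟩
  have hK₁ : ⁅x', y'⁆ ∈ K₁ :=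
    commutator_le_left K₁ ⊤ (commutator_mem_commutator hx' (mem_top y'))
  have hK₂ : ⁅x', e * y'⁆ ∈ K₂ :=
    commutator_le_right ⊤ K₂ (commutator_mem_commutator (mem_top x') hy)
  have hQ (a b : G) : ((⁅a, b⁆ : G) : G ⧸ N) = ⁅(a : G ⧸ N), (b : G ⧸ N)⁆ :=
    map_commutatorElement (QuotientGroup.mk' N) a b
  have c₁ := commute_mk_of_commutator_le h₁ hd hy
  have c₂ := commute_mk_of_commutator_le h₁ hd hK₂
  have c₃ := commute_mk_of_commutator_le h₂ hx' he
  have c₄ := commute_mk_of_commutator_le h₂ hK₁ he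
  rw [← QuotientGroup.eq_one_iff, QuotientGroup.mk_mul, QuotientGroup.mk_inv, mul_inv_eq_one]
  simp only [hQ, QuotientGroup.mk_mul] at c₁ c₂ c₄ ⊢
  rw [commutatorElement_mul_left_of_commute c₁ c₂,
    commutatorElement_mul_right_of_commute c₃ c₄.symm]

end CommutatorElement

section IterCommutator

variable {G : Type*} [Group G]

theorem iterCommutator_cons (X : Subgroup G) {L : List (Subgroup G)} (hL : L ≠ []) :
    iterCommutator (X :: L) = ⁅X, iterCommutator L⁆ := by
  obtain ⟨Y, t, rfl⟩ := List.exists_cons_of_ne_nil hL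
  rfl

theorem iterCommutator_normal_s14 : ∀ {L : List (Subgroup G)}, (∀ X ∈ L, X.Normal) →
    (iterCommutator L).Normal
  | [], _ => inferInstanceAs (⊥ : Subgroup G).Normal
  | [X], h => h X (List.mem_singleton_self X)
  | X :: Y :: t, h => by
    have := h X List.mem_cons_self
    have := iterCommutator_normal_s14 fun Z hZ ↦ h Z (List.mem_cons_of_mem X hZ)
    exact commutator_normal X (iterCommutator (Y :: t))

theorem iterCommutator_le_of_mem_s14 : ∀ {L : List (Subgroup G)}, (∀ X ∈ L, X.Normal) →
    ∀ {X}, X ∈ L → iterCommutator L ≤ X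
  | [X], _, _, hX => (List.mem_singleton.mp hX).ge
  | X :: Y :: t, h, Z, hZ => by
    have := h X List.mem_cons_self
    have htail : ∀ W ∈ Y :: t, W.Normal := fun W hW ↦ h W (List.mem_cons_of_mem X hW)
    have := iterCommutator_normal_s14 htail
    rcases List.mem_cons.mp hZ with rfl | hZ
    · exact commutator_le_left _ _
    · exact (commutator_le_right _ _).trans (iterCommutator_le_of_mem_s14 htail hZ)

theorem iterCommutator_ofFn_succ_succ {k : ℕ} (f : Fin (k + 2) → Subgroup G) :
    iterCommutator (List.ofFn f) = ⁅f 0, iterCommutator (List.ofFn (Fin.tail f))⁆ := by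
  rw [List.ofFn_succ, iterCommutator_cons _ (by simp)]
  rfl

theorem iterCommutator_ofFn_normal {k : ℕ} {f : Fin k → Subgroup G} (hf : ∀ i, (f i).Normal) :
    (iterCommutator (List.ofFn f)).Normal :=
  iterCommutator_normal_s14 fun X hX ↦ by
    obtain ⟨i, rfl⟩ := List.mem_ofFn.mp hX
    exact hf i

theorem commutator_iterCommutator_ofFn_le {H : Subgroup G} :
    ∀ {k : ℕ} {f g : Fin k → Subgroup G}, (∀ i, (f i).Normal) → (∀ i, (g i).Normal) →
      (∀ i, ⁅H, f i⁆ ≤ g i) →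
      ⁅H, iterCommutator (List.ofFn f)⁆ ≤
        ⨆ j, iterCommutator (List.ofFn (Function.update f j (g j)))
  | 0, _, _, _, _, _ => by simp [iterCommutator, commutator_bot_right]
  | 1, f, g, _, _, hfg => le_iSup_of_le 0 (by simpa [iterCommutator] using hfg 0)
  | k + 2, f, g, hf, hg, hfg => by
    have (j : Fin (k + 2)) : (iterCommutator (List.ofFn (Function.update f j (g j)))).Normal :=
      iterCommutator_ofFn_normal fun i ↦ by
        rcases eq_or_ne i j with rfl | hij
        · simpa using hg i
        · simpa [hij] using hf i
    rw [iterCommutator_ofFn_succ_succ, commutator_comm]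
    apply commutator_commutator_le_of_rotate
    · rw [commutator_comm _ H, commutator_comm]
      refine (commutator_mono le_rfl (commutator_iterCommutator_ofFn_le (fun i ↦ hf i.succ)
        (fun i ↦ hg i.succ) (fun i ↦ hfg i.succ))).trans (commutator_iSup_le fun j ↦ ?_)
      refine le_iSup_of_le j.succ ?_
      rw [iterCommutator_ofFn_succ_succ, Fin.tail_update_succ,
        Function.update_of_ne (Fin.succ_ne_zero j).symm]
      rfl
    · refine le_iSup_of_le 0 ?_
      rw [iterCommutator_ofFn_succ_succ, Fin.tail_update_zero, Function.update_self]
      exact commutator_mono (hfg 0) le_rfl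

end IterCommutator

theorem Finset.sup_univ_update_sup {ι α : Type*} [Fintype ι] [DecidableEq ι] [SemilatticeSup α]
    [OrderBot α] (c : ι → α) (j : ι) (a : α) :
    Finset.univ.sup (Function.update c j (c j ⊔ a)) = Finset.univ.sup c ⊔ a := by
  refine le_antisymm (Finset.sup_le fun i _ ↦ ?_) (sup_le (Finset.sup_le fun i _ ↦ ?_) ?_)
  · rcases eq_or_ne i j with rfl | hij
    · simpa using sup_le_sup_right (Finset.le_sup (Finset.mem_univ i)) a
    · simpa [hij] using le_sup_of_le_left (Finset.le_sup (f := c) (Finset.mem_univ i))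
  · rcases eq_or_ne i j with rfl | hij
    · exact Finset.le_sup_of_le (Finset.mem_univ i) (by simp)
    · exact Finset.le_sup_of_le (Finset.mem_univ i) (by simp [hij])
  · exact Finset.le_sup_of_le (Finset.mem_univ j) (by simp)

section Ad

variable {F : Type*} [Group F] {n : ℕ} {R : Fin n → Subgroup F}

theorem adInf_normal_s14 (hR : ∀ i, (R i).Normal) (B : Finset (Fin n)) : (adInf R B).Normal :=
  normal_iInf_normal fun i ↦ normal_iInf_normal fun _ ↦ hR i

theorem adInf_union (B C : Finset (Fin n)) : adInf R (B ∪ C) = adInf R B ⊓ adInf R C :=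
  Finset.iInf_union

theorem adInf_sup {k : ℕ} (c : Fin k → Finset (Fin n)) :
    adInf R (Finset.univ.sup c) = ⨅ i, adInf R (c i) := by
  simp only [adInf, Finset.sup_eq_biUnion, Finset.iInf_biUnion, Finset.mem_univ, iInf_true]

theorem iterCommutator_le_adD {k : ℕ} {c : Fin k → Finset (Fin n)} :
    iterCommutator (List.ofFn fun i ↦ adInf R (c i)) ≤ adD R k (Finset.univ.sup c) :=
  le_iSup₂_of_le c rfl le_rfl

theorem adD_normal_s14 (hR : ∀ i, (R i).Normal) (k : ℕ) (A : Finset (Fin n)) :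
    (adD R k A).Normal := by
  have (c : Fin k → Finset (Fin n)) : (iterCommutator (List.ofFn fun i ↦ adInf R (c i))).Normal :=
    iterCommutator_ofFn_normal fun i ↦ adInf_normal_s14 hR (c i)
  unfold adD
  infer_instance

theorem adD_le_adInf (hR : ∀ i, (R i).Normal) (k : ℕ) (A : Finset (Fin n)) :
    adD R k A ≤ adInf R A := by
  refine iSup₂_le fun c hc ↦ ?_
  rw [← hc, adInf_sup]
  exact le_iInf fun i ↦ iterCommutator_le_of_mem_s14
    (fun X hX ↦ by obtain ⟨j, rfl⟩ := List.mem_ofFn.mp hX; exact adInf_normal_s14 hR (c j))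
    (List.mem_ofFn.mpr ⟨i, rfl⟩)

theorem commutator_adInf_adD_le (hR : ∀ i, (R i).Normal) (k : ℕ) (C A : Finset (Fin n)) :
    ⁅adInf R C, adD R k A⁆ ≤ adD R k (A ∪ C) := by
  have := adD_normal_s14 hR k (A ∪ C)
  have := adInf_normal_s14 hR C
  refine commutator_iSup_le fun c ↦ commutator_iSup_le fun hc ↦ ?_
  refine (commutator_iterCommutator_ofFn_le (g := fun i ↦ adInf R (c i ∪ C))
    (fun i ↦ adInf_normal_s14 hR (c i)) (fun i ↦ adInf_normal_s14 hR _) fun i ↦ ?_).trans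
    (iSup_le fun j ↦ ?_)
  · have := adInf_normal_s14 hR (c i)
    rw [adInf_union]
    exact le_inf (commutator_le_right _ _) (commutator_le_left _ _)
  · have hsup : Finset.univ.sup (Function.update c j (c j ∪ C)) = A ∪ C :=
      hc ▸ Finset.sup_univ_update_sup c j C
    rw [← hsup]
    convert iterCommutator_le_adD using 3
    exact (Function.comp_update (adInf R) c j _).symm

end Ad

theorem adD_normal_le_and_commutator_descends_general {F : Type*} [Group F] {n : ℕ}
    (R : Fin n → Subgroup F) (hR : ∀ i, (R i).Normal) (k : ℕ) :
    (∀ A : Finset (Fin n), (adD R k A).Normal ∧ adD R k A ≤ adInf R A) ∧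
    (∀ (A B : Finset (Fin n)) (x x' y y' : F),
      x ∈ adInf R A → x' ∈ adInf R A → y ∈ adInf R B → y' ∈ adInf R B →
      x * x'⁻¹ ∈ adD R k A → y * y'⁻¹ ∈ adD R k B →
      ⁅x, y⁆ * ⁅x', y'⁆⁻¹ ∈ adD R k (A ∪ B)) := by
  refine ⟨fun A ↦ ⟨adD_normal_s14 hR k A, adD_le_adInf hR k A⟩,
    fun A B x x' y y' _ hx' hy _ hxx' hyy' ↦ ?_⟩
  have := adD_normal_s14 hR k (A ∪ B)
  have := adInf_normal_s14 hR A
  have := adInf_normal_s14 hR B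
  have hA : ⁅adD R k A, adInf R B⁆ ≤ adD R k (A ∪ B) := by
    rw [commutator_comm]
    exact commutator_adInf_adD_le hR k B A
  have hB : ⁅adInf R A, adD R k B⁆ ≤ adD R k (A ∪ B) := by
    rw [Finset.union_comm]
    exact commutator_adInf_adD_le hR k A B
  exact commutatorElement_mul_inv_mem_of_commutator_le hA hB hx' hy hxx' hyy'

/-- For a group `F` with normal subgroups `R₁,…,R_n` and `k ≥ 2`: (a) `D_k(F;A)` is a
normal subgroup of `F` contained in `K_A = ⋂_{i∈A}R_i`; (b) the commutator map descends:
if `x ≡ x' mod D_k(F;A)` in `K_A` and `y ≡ y' mod D_k(F;B)` in `K_B`, then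
`[x,y] ≡ [x',y'] mod D_k(F;A∪B)`.  Hence the commutator induces well-defined functions
`h̃ : K_A/D_k(F;A) × K_B/D_k(F;B) → K_{A∪B}/D_k(F;A∪B)`. -/
theorem adD_normal_le_and_commutator_descends {F : Type*} [Group F] {n : ℕ}
    (R : Fin n → Subgroup F) (hR : ∀ i, (R i).Normal) (k : ℕ) (hk : 2 ≤ k) :
    (∀ A : Finset (Fin n), (adD R k A).Normal ∧ adD R k A ≤ adInf R A) ∧
    (∀ (A B : Finset (Fin n)) (x x' y y' : F),
      x ∈ adInf R A → x' ∈ adInf R A → y ∈ adInf R B → y' ∈ adInf R B →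
      x * x'⁻¹ ∈ adD R k A → y * y'⁻¹ ∈ adD R k B →
      ⁅x, y⁆ * ⁅x', y'⁆⁻¹ ∈ adD R k (A ∪ B)) :=
  adD_normal_le_and_commutator_descends_general R hR k
end
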